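/- Let 2 < p < ∞, 0 < γ < 2, r₀ = 2(p−γ)/(2−γ), and r > max(r₀, 3). Then for every u₀ ∈ L^p(ℝ³, (1+|x|²)^{−γ/2} dx) and every η > 0, there is a decomposition u₀ = v + b with v ∈ L²(ℝ³, (1+|x|²)^{−1} dx) and b ∈ L^r(ℝ³) with ‖b‖_{L^r} < η. -/

import Mathlib

/-!
Cut `u₀` at the height `κ (1+|x|²)^{-c}` with `c = (2-γ)/(2(p-2))`. Where `|u₀|` lies
above it, `|u₀|^{2-p} ≤ κ^{2-p} (1+|x|²)^{c(p-2)}`, and the choice of `c` turns this into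
`|u₀|² Φ₂ ≤ κ^{2-p} |u₀|^p Φ_γ`. Where `|u₀|` lies below it,
`|u₀|^{r-p} ≤ κ^{r-p} (1+|x|²)^{-c(r-p)} ≤ κ^{r-p} Φ_γ`, the last step being exactly `r ≥ r₀`.
Integrating, the part above the height lies in `L²(Φ₂ dx)`, while the part below it has
`‖b‖_r^r ≤ κ^{r-p} ‖u₀‖^p_{L^p(Φ_γ)}`, which is small for small `κ` because `r > p`.
-/

open MeasureTheory ENNReal

noncomputable abbrev E3 : Type := EuclideanSpace ℝ (Fin 3)

/-- The weighted measure `Φ_γ dx` with `Φ_γ(x) = (1+|x|²)^{-γ/2}`. -/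
noncomputable def muPhi (γ : ℝ) : Measure E3 :=
  volume.withDensity (fun x => ENNReal.ofReal ((1 + ‖x‖ ^ 2) ^ (-γ / 2)))

open Filter Topology

namespace CalderonSplitting

section RealInequalities

theorem rpow_le_rpow_sub_mul_rpow_of_le {ℓ t q p : ℝ} (hℓ : 0 < ℓ) (hℓt : ℓ ≤ t)
    (hqp : q ≤ p) : t ^ q ≤ ℓ ^ (q - p) * t ^ p := by
  have ht : 0 < t := hℓ.trans_le hℓt
  calc t ^ q = t ^ (q - p) * t ^ p := by rw [← Real.rpow_add ht, sub_add_cancel]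
    _ ≤ ℓ ^ (q - p) * t ^ p :=
      mul_le_mul_of_nonneg_right (Real.rpow_le_rpow_of_nonpos hℓ hℓt (by linarith))
        (by positivity)

theorem rpow_le_rpow_sub_mul_rpow_of_ge {ℓ t p r : ℝ} (ht : 0 ≤ t) (htℓ : t ≤ ℓ)
    (hpr : p ≤ r) (hr : r ≠ 0) : t ^ r ≤ ℓ ^ (r - p) * t ^ p := by
  calc t ^ r = t ^ (r - p) * t ^ p := by
        rw [← Real.rpow_add' ht (by rwa [sub_add_cancel]), sub_add_cancel]
    _ ≤ ℓ ^ (r - p) * t ^ p :=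
      mul_le_mul_of_nonneg_right (Real.rpow_le_rpow ht htℓ (by linarith)) (by positivity)

variable {κ a c t p : ℝ}

theorem rpow_neg_mul_rpow_le_of_level_le {q β γ : ℝ} (hκ : 0 < κ) (ha : 0 < a)
    (hqp : q ≤ p) (hc : c * (p - q) = (β - γ) / 2) (hlevel : κ * a ^ (-c) ≤ t) :
    a ^ (-β / 2) * t ^ q ≤ κ ^ (q - p) * (a ^ (-γ / 2) * t ^ p) := by
  have hpow : (κ * a ^ (-c)) ^ (q - p) = κ ^ (q - p) * a ^ (-c * (q - p)) := by
    rw [Real.mul_rpow hκ.le (by positivity), ← Real.rpow_mul ha.le]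
  have hweight : a ^ (-β / 2) * a ^ (-c * (q - p)) = a ^ (-γ / 2) := by
    rw [← Real.rpow_add ha]
    congr 1
    linarith
  calc a ^ (-β / 2) * t ^ q ≤ a ^ (-β / 2) * ((κ * a ^ (-c)) ^ (q - p) * t ^ p) :=
        mul_le_mul_of_nonneg_left
          (rpow_le_rpow_sub_mul_rpow_of_le (by positivity) hlevel hqp) (by positivity)
    _ = κ ^ (q - p) * (a ^ (-γ / 2) * t ^ p) := by rw [hpow, ← hweight]; ring

theorem rpow_le_of_le_level {r γ : ℝ} (hκ : 0 < κ) (ha : 1 ≤ a) (hpr : p ≤ r) (hr : r ≠ 0)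
    (hc : γ / 2 ≤ c * (r - p)) (ht : 0 ≤ t) (hlevel : t ≤ κ * a ^ (-c)) :
    t ^ r ≤ κ ^ (r - p) * (a ^ (-γ / 2) * t ^ p) := by
  have ha0 : 0 < a := one_pos.trans_le ha
  have hpow : (κ * a ^ (-c)) ^ (r - p) ≤ κ ^ (r - p) * a ^ (-γ / 2) := by
    rw [Real.mul_rpow hκ.le (by positivity), ← Real.rpow_mul ha0.le]
    exact mul_le_mul_of_nonneg_left
      (Real.rpow_le_rpow_of_exponent_le ha (by linarith)) (by positivity)
  calc t ^ r ≤ (κ * a ^ (-c)) ^ (r - p) * t ^ p :=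
        rpow_le_rpow_sub_mul_rpow_of_ge ht hlevel hpr hr
    _ ≤ κ ^ (r - p) * a ^ (-γ / 2) * t ^ p := by gcongr
    _ = κ ^ (r - p) * (a ^ (-γ / 2) * t ^ p) := by ring

end RealInequalities

theorem enorm_rpow_eq_ofReal {q : ℝ} (hq : 0 ≤ q) (x : ℝ) :
    ‖x‖ₑ ^ q = ENNReal.ofReal (|x| ^ q) := by
  rw [Real.enorm_eq_ofReal_abs, ENNReal.ofReal_rpow_of_nonneg (abs_nonneg x) hq]

theorem exists_pos_ofReal_rpow_mul_lt {s : ℝ} (hs : 0 < s) {M ε : ℝ≥0∞} (hM : M ≠ ⊤)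
    (hε : ε ≠ 0) : ∃ κ : ℝ, 0 < κ ∧ ENNReal.ofReal (κ ^ s) * M < ε := by
  have hpow : Tendsto (fun κ : ℝ => κ ^ s) (𝓝[>] 0) (𝓝 0) := by
    simpa [Real.zero_rpow hs.ne'] using
      (Real.continuousAt_rpow_const 0 s (Or.inr hs.le)).tendsto.mono_left nhdsWithin_le_nhds
  have hlim : Tendsto (fun κ : ℝ => ENNReal.ofReal (κ ^ s) * M) (𝓝[>] 0) (𝓝 0) := by
    simpa using ENNReal.Tendsto.mul_const (ENNReal.tendsto_ofReal hpow) (Or.inr hM)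
  obtain ⟨κ, hκε, hκ⟩ :=
    ((hlim.eventually (gt_mem_nhds (pos_iff_ne_zero.2 hε))).and self_mem_nhdsWithin).exists
  exact ⟨κ, hκ, hκε⟩

section Splitting

variable {α : Type*} {w u : α → ℝ} {c κ : ℝ}

def levelSet (u w : α → ℝ) (c κ : ℝ) : Set α := {x | κ * w x ^ (-c) ≤ |u x|}

noncomputable def largePart (u w : α → ℝ) (c κ : ℝ) : α → ℝ :=
  (levelSet u w c κ).indicator u

noncomputable def smallPart (u w : α → ℝ) (c κ : ℝ) : α → ℝ :=
  (levelSet u w c κ)ᶜ.indicator u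

theorem largePart_add_smallPart : largePart u w c κ + smallPart u w c κ = u :=
  Set.indicator_self_add_compl _ _

theorem ofReal_mul_enorm_largePart_le {p q β γ : ℝ} (hw : ∀ x, 0 < w x) (hκ : 0 < κ)
    (hq : 0 < q) (hqp : q ≤ p) (hc : c * (p - q) = (β - γ) / 2) (x : α) :
    ENNReal.ofReal (w x ^ (-β / 2)) * ‖largePart u w c κ x‖ₑ ^ q ≤
      ENNReal.ofReal (κ ^ (q - p)) * (ENNReal.ofReal (w x ^ (-γ / 2)) * ‖u x‖ₑ ^ p) := by
  have hw0 := hw x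
  by_cases hx : x ∈ levelSet u w c κ
  · rw [largePart, Set.indicator_of_mem hx, enorm_rpow_eq_ofReal hq.le,
      enorm_rpow_eq_ofReal (by linarith), ← ENNReal.ofReal_mul (by positivity),
      ← ENNReal.ofReal_mul (by positivity), ← ENNReal.ofReal_mul (by positivity)]
    exact ENNReal.ofReal_le_ofReal (rpow_neg_mul_rpow_le_of_level_le hκ hw0 hqp hc hx)
  · simp [largePart, Set.indicator_of_notMem hx, ENNReal.zero_rpow_of_pos hq]

theorem enorm_smallPart_rpow_le {p r γ : ℝ} (hw : ∀ x, 1 ≤ w x) (hκ : 0 < κ) (hp : 0 ≤ p)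
    (hpr : p < r) (hc : γ / 2 ≤ c * (r - p)) (x : α) :
    ‖smallPart u w c κ x‖ₑ ^ r ≤
      ENNReal.ofReal (κ ^ (r - p)) * (ENNReal.ofReal (w x ^ (-γ / 2)) * ‖u x‖ₑ ^ p) := by
  have hw1 := hw x
  have hr : 0 < r := hp.trans_lt hpr
  by_cases hx : x ∈ levelSet u w c κ
  · simp [smallPart, Set.indicator_of_notMem (Set.notMem_compl_iff.2 hx),
      ENNReal.zero_rpow_of_pos hr]
  · have hbound := rpow_le_of_le_level hκ hw1 hpr.le hr.ne' hc (abs_nonneg (u x))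
      (le_of_not_ge hx)
    rw [smallPart, Set.indicator_of_mem (Set.mem_compl hx), enorm_rpow_eq_ofReal hr.le,
      enorm_rpow_eq_ofReal hp, ← ENNReal.ofReal_mul (by positivity),
      ← ENNReal.ofReal_mul (by positivity)]
    exact ENNReal.ofReal_le_ofReal hbound

variable [MeasurableSpace α] {μ : Measure α}

theorem memLp_ofReal_of_lintegral_ne_top {f : α → ℝ} {q : ℝ} (hq : 0 < q)
    (hf : AEStronglyMeasurable f μ) (h : ∫⁻ x, ‖f x‖ₑ ^ q ∂μ ≠ ⊤) :
    MemLp f (ENNReal.ofReal q) μ := by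
  refine ⟨hf, (eLpNorm_lt_top_iff_lintegral_rpow_enorm_lt_top (by simpa) ofReal_ne_top).2 ?_⟩
  rw [toReal_ofReal hq.le]
  exact h.lt_top

theorem eLpNorm_ofReal_lt_of_lintegral_lt {f : α → ℝ} {r : ℝ} {ε : ℝ≥0∞} (hr : 0 < r)
    (h : ∫⁻ x, ‖f x‖ₑ ^ r ∂μ < ε ^ r) : eLpNorm f (ENNReal.ofReal r) μ < ε := by
  rw [eLpNorm_eq_lintegral_rpow_enorm_toReal (by simpa) ofReal_ne_top, toReal_ofReal hr.le]
  calc (∫⁻ x, ‖f x‖ₑ ^ r ∂μ) ^ (1 / r) < (ε ^ r) ^ (1 / r) :=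
        ENNReal.rpow_lt_rpow h (by positivity)
    _ = ε := by rw [one_div, ENNReal.rpow_rpow_inv hr.ne']

noncomputable def weightedMeasure (μ : Measure α) (w : α → ℝ) (γ : ℝ) : Measure α :=
  μ.withDensity fun x => ENNReal.ofReal (w x ^ (-γ / 2))

theorem weightedMeasure_absolutelyContinuous (γ : ℝ) : weightedMeasure μ w γ ≪ μ :=
  withDensity_absolutelyContinuous _ _

theorem absolutelyContinuous_weightedMeasure (hw : Measurable w) (hw0 : ∀ x, 0 < w x)
    (γ : ℝ) : μ ≪ weightedMeasure μ w γ :=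
  withDensity_absolutelyContinuous' (by fun_prop)
    (ae_of_all _ fun x => (ENNReal.ofReal_pos.2 (Real.rpow_pos_of_pos (hw0 x) _)).ne')

theorem lintegral_weightedMeasure (hw : Measurable w) (γ : ℝ) (f : α → ℝ≥0∞) :
    ∫⁻ x, f x ∂weightedMeasure μ w γ = ∫⁻ x, ENNReal.ofReal (w x ^ (-γ / 2)) * f x ∂μ :=
  lintegral_withDensity_eq_lintegral_mul_non_measurable _ (by fun_prop)
    (ae_of_all _ fun _ => ofReal_lt_top) f

theorem nullMeasurableSet_levelSet (hw : Measurable w) (hu : AEStronglyMeasurable u μ) :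
    NullMeasurableSet (levelSet u w c κ) μ :=
  nullMeasurableSet_le (by fun_prop) (by fun_prop)

theorem lintegral_largePart_le {p q β γ : ℝ} (hwm : Measurable w) (hw : ∀ x, 0 < w x)
    (hκ : 0 < κ) (hq : 0 < q) (hqp : q ≤ p) (hc : c * (p - q) = (β - γ) / 2) :
    ∫⁻ x, ‖largePart u w c κ x‖ₑ ^ q ∂weightedMeasure μ w β ≤
      ENNReal.ofReal (κ ^ (q - p)) * ∫⁻ x, ‖u x‖ₑ ^ p ∂weightedMeasure μ w γ := by
  rw [lintegral_weightedMeasure hwm, lintegral_weightedMeasure hwm,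
    ← lintegral_const_mul' _ _ ofReal_ne_top]
  exact lintegral_mono (ofReal_mul_enorm_largePart_le hw hκ hq hqp hc)

theorem lintegral_smallPart_le {p r γ : ℝ} (hwm : Measurable w) (hw : ∀ x, 1 ≤ w x)
    (hκ : 0 < κ) (hp : 0 ≤ p) (hpr : p < r) (hc : γ / 2 ≤ c * (r - p)) :
    ∫⁻ x, ‖smallPart u w c κ x‖ₑ ^ r ∂μ ≤
      ENNReal.ofReal (κ ^ (r - p)) * ∫⁻ x, ‖u x‖ₑ ^ p ∂weightedMeasure μ w γ := by
  rw [lintegral_weightedMeasure hwm, ← lintegral_const_mul' _ _ ofReal_ne_top]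
  exact lintegral_mono (enorm_smallPart_rpow_le hw hκ hp hpr hc)

theorem exists_add_memLp_weightedMeasure_eLpNorm_lt (hwm : Measurable w)
    (hw : ∀ x, 1 ≤ w x) {p q r β γ : ℝ} (hq : 0 < q) (hqp : q < p) (hγβ : γ < β) (hpr : p < r)
    (hr : p + γ * (p - q) / (β - γ) ≤ r)
    (hu : MemLp u (ENNReal.ofReal p) (weightedMeasure μ w γ)) {η : ℝ} (hη : 0 < η) :
    ∃ v b : α → ℝ, u = v + b ∧ MemLp v (ENNReal.ofReal q) (weightedMeasure μ w β) ∧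
      MemLp b (ENNReal.ofReal r) μ ∧ eLpNorm b (ENNReal.ofReal r) μ < ENNReal.ofReal η := by
  have hp : 0 < p := hq.trans hqp
  have hw0 : ∀ x, 0 < w x := fun x => one_pos.trans_le (hw x)
  set c := (β - γ) / (2 * (p - q))
  have hc0 : 0 ≤ c := div_nonneg (by linarith) (by linarith)
  have hcq : c * (p - q) = (β - γ) / 2 := by
    change (β - γ) / (2 * (p - q)) * (p - q) = _
    field_simp [show p - q ≠ 0 by linarith]
  have hcr : γ / 2 ≤ c * (r - p) := by
    have hγ : γ / 2 = c * (γ * (p - q) / (β - γ)) := by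
      rw [show c * (γ * (p - q) / (β - γ)) = γ * (c * (p - q)) / (β - γ) by ring, hcq]
      field_simp [show β - γ ≠ 0 by linarith]
    rw [hγ]
    exact mul_le_mul_of_nonneg_left (by linarith) hc0
  have hM : ∫⁻ x, ‖u x‖ₑ ^ p ∂weightedMeasure μ w γ ≠ ⊤ := by
    simpa [toReal_ofReal hp.le] using
      (lintegral_rpow_enorm_lt_top_of_eLpNorm_lt_top (by simpa) ofReal_ne_top hu.2).ne
  obtain ⟨κ, hκ, hκM⟩ := exists_pos_ofReal_rpow_mul_lt (sub_pos.2 hpr) hM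
    (ENNReal.rpow_pos (ofReal_pos.2 hη) ofReal_ne_top).ne'
  have huμ : AEStronglyMeasurable u μ :=
    hu.1.mono_ac (absolutelyContinuous_weightedMeasure hwm hw0 γ)
  have hS : NullMeasurableSet (levelSet u w c κ) μ := nullMeasurableSet_levelSet hwm huμ
  have hsmall := lintegral_smallPart_le (μ := μ) (u := u) hwm hw hκ hp.le hpr hcr
  refine ⟨largePart u w c κ, smallPart u w c κ, largePart_add_smallPart.symm, ?_, ?_, ?_⟩
  · refine memLp_ofReal_of_lintegral_ne_top hq
      ((huμ.indicator₀ hS).mono_ac (weightedMeasure_absolutelyContinuous β)) ?_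
    exact ne_top_of_le_ne_top (mul_ne_top ofReal_ne_top hM)
      (lintegral_largePart_le hwm hw0 hκ hq hqp.le hcq)
  · exact memLp_ofReal_of_lintegral_ne_top (hq.trans (hqp.trans hpr))
      (huμ.indicator₀ hS.compl) (ne_top_of_le_ne_top (mul_ne_top ofReal_ne_top hM) hsmall)
  · exact eLpNorm_ofReal_lt_of_lintegral_lt (hp.trans hpr) (hsmall.trans_lt hκM)

end Splitting

end CalderonSplitting

theorem muPhi_eq_weightedMeasure (γ : ℝ) :
    muPhi γ = CalderonSplitting.weightedMeasure volume (fun x => 1 + ‖x‖ ^ 2) γ :=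
  rfl

/-- Calderón splitting: for `2 < p < ∞`, `0 < γ < 2`,
`r₀ = 2(p-γ)/(2-γ)` and `r > max(r₀,3)`, every `u₀ ∈ L^p(Φ_γ dx)` splits for every
`η > 0` as `u₀ = v + b` with `v ∈ L²(Φ₂ dx)` and `b ∈ L^r` with `‖b‖_r < η`. -/
theorem stmt18 (p γ r : ℝ) (hp2 : 2 < p) (hγ0 : 0 < γ) (hγ2 : γ < 2)
    (hr : max (2 * (p - γ) / (2 - γ)) 3 < r)
    (u₀ : E3 → ℝ) (hu₀ : MemLp u₀ (ENNReal.ofReal p) (muPhi γ)) (η : ℝ) (hη : 0 < η) :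
    ∃ v b : E3 → ℝ, u₀ = v + b ∧
      MemLp v 2 (muPhi 2) ∧
      MemLp b (ENNReal.ofReal r) volume ∧
      eLpNorm b (ENNReal.ofReal r) volume < ENNReal.ofReal η := by
  have hr₀ : 2 * (p - γ) / (2 - γ) = p + γ * (p - 2) / (2 - γ) := by
    field_simp [show 2 - γ ≠ 0 by linarith]
    ring
  have hgap : 0 < γ * (p - 2) / (2 - γ) := div_pos (mul_pos hγ0 (by linarith)) (by linarith)
  have hr' : p + γ * (p - 2) / (2 - γ) < r := hr₀ ▸ (le_max_left _ _).trans_lt hr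
  rw [muPhi_eq_weightedMeasure] at hu₀
  obtain ⟨v, b, hsplit, hv, hb, hbη⟩ :=
    CalderonSplitting.exists_add_memLp_weightedMeasure_eLpNorm_lt (by fun_prop)
      (fun x => le_add_of_nonneg_right (by positivity)) two_pos hp2 hγ2 (by linarith) hr'.le
      hu₀ hη
  rw [ENNReal.ofReal_ofNat, ← muPhi_eq_weightedMeasure] at hv
  exact ⟨v, b, hsplit, hv, hb, hbη⟩
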